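/- Let φ, g : ℝⁿ → ℝ be convex, X ⊆ ℝⁿ convex, b ∈ ℝ, λ* > 0. Suppose x₊, x₋ both minimize L(x) = φ(x) + λ*(g(x) − b) over X, with g(x₋) < b < g(x₊), and suppose g is affine on the segment [x₋, x₊] with the unique α* ∈ (0,1) such that x* = α*·x₊ + (1−α*)·x₋ satisfies g(x*) = b. Then x* is an optimal solution of: minimize φ(x) subject to g(x) ≤ b, x ∈ X. -/

import Mathlib

/-!
The Lagrangian `L = φ + λ* (g - b)` is convex, so its minimizers over `X` form a convex set and
`x*`, lying on the segment `[x₋, x₊]`, minimizes `L` over `X` as well. Since `g x* = b`, the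
penalty term vanishes at `x*` and is nonpositive at every feasible point, so `x*` minimizes `φ`
over the feasible set.
-/

open Set

section MinimizerSet

variable {𝕜 E β : Type*} [Semiring 𝕜] [PartialOrder 𝕜] [AddCommMonoid E] [SMul 𝕜 E]
  [AddCommMonoid β] [PartialOrder β] [IsOrderedAddMonoid β] [Module 𝕜 β] [PosSMulMono 𝕜 β]
  {s : Set E} {f : E → β}

theorem ConvexOn.convex_setOf_isMinOn (hf : ConvexOn 𝕜 s f) :
    Convex 𝕜 {x | x ∈ s ∧ IsMinOn f s x} := by
  intro x hx
  -- All minimizers share the minimal value, so they form the sublevel set at `f x`.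
  have hsublevel : {x | x ∈ s ∧ IsMinOn f s x} = {z ∈ s | f z ≤ f x} := by
    ext z
    refine ⟨fun hz => ⟨hz.1, isMinOn_iff.mp hz.2 x hx.1⟩, fun hz => ⟨hz.1, ?_⟩⟩
    exact isMinOn_iff.mpr fun w hw => hz.2.trans (isMinOn_iff.mp hx.2 w hw)
  rw [hsublevel] at hx ⊢
  exact hf.convex_le (f x) hx

end MinimizerSet

theorem isMinOn_of_isMinOn_lagrangian {α R : Type*} [CommRing R] [LinearOrder R]
    [IsStrictOrderedRing R] {φ g : α → R} {X : Set α} {b μ : R} {x : α} (hμ : 0 ≤ μ)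
    (hmin : IsMinOn (fun y => φ y + μ * (g y - b)) X x) (hgx : g x = b) :
    IsMinOn φ {y ∈ X | g y ≤ b} x := by
  refine isMinOn_iff.mpr fun y ⟨hyX, hgy⟩ => ?_
  have hpenalty : μ * (g y - b) ≤ 0 := mul_nonpos_of_nonneg_of_nonpos hμ (sub_nonpos.mpr hgy)
  have hL := isMinOn_iff.mp hmin y hyX
  simp only [hgx, sub_self, mul_zero, add_zero] at hL
  linarith

theorem stmt_19_general {n : ℕ} (φ g : (Fin n → ℝ) → ℝ) (X : Set (Fin n → ℝ))
    (hφ : ConvexOn ℝ Set.univ φ) (hg : ConvexOn ℝ Set.univ g)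
    (hX : Convex ℝ X) (b lamStar : ℝ) (hlam : 0 < lamStar)
    (xp xm : Fin n → ℝ) (hxpX : xp ∈ X) (hxmX : xm ∈ X)
    (hminp : ∀ y ∈ X, φ xp + lamStar * (g xp - b) ≤ φ y + lamStar * (g y - b))
    (hminm : ∀ y ∈ X, φ xm + lamStar * (g xm - b) ≤ φ y + lamStar * (g y - b))
    (α : ℝ) (hα : α ∈ Set.Ioo (0 : ℝ) 1)
    (hgb : g (α • xp + (1 - α) • xm) = b) :
    (α • xp + (1 - α) • xm) ∈ X ∧
      ∀ y ∈ X, g y ≤ b → φ (α • xp + (1 - α) • xm) ≤ φ y := by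
  set L : (Fin n → ℝ) → ℝ := fun y => φ y + lamStar * (g y - b)
  have hL : ConvexOn ℝ X L := by
    have := hφ.add ((hg.add_const (-b)).smul hlam.le)
    exact (this.subset (subset_univ X) hX).congr fun y _ => by simp [L, sub_eq_add_neg]
  have hxs : α • xp + (1 - α) • xm ∈ {x | x ∈ X ∧ IsMinOn L X x} :=
    hL.convex_setOf_isMinOn ⟨hxpX, isMinOn_iff.mpr hminp⟩ ⟨hxmX, isMinOn_iff.mpr hminm⟩
      hα.1.le (sub_nonneg.mpr hα.2.le) (add_sub_cancel α 1)
  exact ⟨hxs.1, fun y hyX hgy =>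
    isMinOn_iff.mp (isMinOn_of_isMinOn_lagrangian hlam.le hxs.2 hgb) y ⟨hyX, hgy⟩⟩

theorem stmt_19 {n : ℕ} (φ g : (Fin n → ℝ) → ℝ) (X : Set (Fin n → ℝ))
    (hφ : ConvexOn ℝ Set.univ φ) (hg : ConvexOn ℝ Set.univ g)
    (hX : Convex ℝ X) (b lamStar : ℝ) (hlam : 0 < lamStar)
    (xp xm : Fin n → ℝ) (hxpX : xp ∈ X) (hxmX : xm ∈ X)
    (hminp : ∀ y ∈ X, φ xp + lamStar * (g xp - b) ≤ φ y + lamStar * (g y - b))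
    (hminm : ∀ y ∈ X, φ xm + lamStar * (g xm - b) ≤ φ y + lamStar * (g y - b))
    (hgm : g xm < b) (hgp : b < g xp)
    (haff : ∀ t : ℝ, t ∈ Set.Icc (0 : ℝ) 1 →
      g (t • xp + (1 - t) • xm) = t * g xp + (1 - t) * g xm)
    (α : ℝ) (hα : α ∈ Set.Ioo (0 : ℝ) 1)
    (hgb : g (α • xp + (1 - α) • xm) = b) :
    (α • xp + (1 - α) • xm) ∈ X ∧
      ∀ y ∈ X, g y ≤ b → φ (α • xp + (1 - α) • xm) ≤ φ y :=
  stmt_19_general φ g X hφ hg hX b lamStar hlam xp xm hxpX hxmX hminp hminm α hα hgb
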